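/- Let G be a plane triangulation and H a connected embedded induced subgraph of G. For any face f of H, all vertices of G lying in the interior of f belong to the same connected component of G \ H. Moreover, if H consists of a single vertex with no edges, then G \ H is connected. -/

import Mathlib

/-- A combinatorial map (embedded multigraph): a finite nonempty set of darts
(oriented edges) with a fixed-point-free involution pairing darts into edges and
a rotation permutation whose orbits are the vertices; connectivity is required. -/
structure CombMap where
  D : Type
  [fintypeD : Fintype D]
  [nonemptyD : Nonempty D]
  inv : Equiv.Perm D
  inv_invol : ∀ d, inv (inv d) = d
  inv_ne : ∀ d, inv d ≠ d
  rot : Equiv.Perm D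
  conn : ∀ d d' : D,
    ∃ g ∈ Subgroup.closure ({rot, inv} : Set (Equiv.Perm D)), g d = d'

attribute [instance] CombMap.fintypeD CombMap.nonemptyD

namespace CombMap

variable (G : CombMap)

def vertexSetoid : Setoid G.D :=
  ⟨G.rot.SameCycle,
   ⟨fun _ => ⟨0, by simp⟩, Equiv.Perm.SameCycle.symm, Equiv.Perm.SameCycle.trans⟩⟩

def Vertex : Type := Quotient G.vertexSetoid

def vertexOf (d : G.D) : G.Vertex := Quotient.mk G.vertexSetoid d

/-- The facial permutation; its orbits are the faces. -/
def facePerm : Equiv.Perm G.D := G.rot * G.inv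

def faceSetoid : Setoid G.D :=
  ⟨G.facePerm.SameCycle,
   ⟨fun _ => ⟨0, by simp⟩, Equiv.Perm.SameCycle.symm, Equiv.Perm.SameCycle.trans⟩⟩

def Face : Type := Quotient G.faceSetoid

def faceOf (d : G.D) : G.Face := Quotient.mk G.faceSetoid d

def edgeSetoid : Setoid G.D :=
  ⟨fun d d' => d' = d ∨ d' = G.inv d, by
    constructor
    · exact fun x => Or.inl rfl
    · rintro x y (rfl | rfl)
      · exact Or.inl rfl
      · exact Or.inr (G.inv_invol x).symm
    · rintro x y z (rfl | rfl) h2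
      · exact h2
      · rcases h2 with rfl | rfl
        · exact Or.inr rfl
        · exact Or.inl (G.inv_invol x)⟩

def Edge : Type := Quotient G.edgeSetoid

def edgeOf (d : G.D) : G.Edge := Quotient.mk G.edgeSetoid d

noncomputable def eulerChar : ℤ :=
  (Nat.card G.Vertex : ℤ) - (Nat.card G.Edge : ℤ) + (Nat.card G.Face : ℤ)

def IsPlane : Prop := G.eulerChar = 2

def HasGenus (g : ℕ) : Prop := G.eulerChar = 2 - 2 * (g : ℤ)

def Adj (u w : G.Vertex) : Prop :=
  ∃ d, G.vertexOf d = u ∧ G.vertexOf (G.inv d) = w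

noncomputable def degree (v : G.Vertex) : ℕ := Nat.card {d : G.D // G.vertexOf d = v}

def edgeJoins (e : G.Edge) (u w : G.Vertex) : Prop :=
  ∃ d, G.edgeOf d = e ∧ G.vertexOf d = u ∧ G.vertexOf (G.inv d) = w

/-- Reachability by walks avoiding the vertex set `X`. -/
def ReachAvoiding (X : Set G.Vertex) : G.Vertex → G.Vertex → Prop :=
  Relation.ReflTransGen (fun a b => a ∉ X ∧ b ∉ X ∧ G.Adj a b)

def TwoConnected : Prop :=
  3 ≤ Nat.card G.Vertex ∧
    ∀ v u w : G.Vertex, u ≠ v → w ≠ v → G.ReachAvoiding {v} u w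

def ThreeConnected : Prop :=
  4 ≤ Nat.card G.Vertex ∧
    ∀ x y u w : G.Vertex, u ∉ ({x, y} : Set G.Vertex) →
      w ∉ ({x, y} : Set G.Vertex) → G.ReachAvoiding {x, y} u w

/-- No loops and no multiple edges. -/
def Simple : Prop :=
  (∀ d, G.vertexOf d ≠ G.vertexOf (G.inv d)) ∧
  ∀ d d', G.vertexOf d = G.vertexOf d' →
    G.vertexOf (G.inv d) = G.vertexOf (G.inv d') → G.edgeOf d = G.edgeOf d'

/-- Every facial walk has length exactly three. -/
def Triangulated : Prop :=
  ∀ d, G.facePerm d ≠ d ∧ G.facePerm (G.facePerm (G.facePerm d)) = d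

def boundaryV (f : G.Face) : Set G.Vertex :=
  {v | ∃ d, G.faceOf d = f ∧ G.vertexOf d = v}

def boundaryE (f : G.Face) : Set G.Edge :=
  {e | ∃ d, G.faceOf d = f ∧ G.edgeOf d = e}

/-- A polyhedral embedding: simple, and any two distinct faces meet in
nothing, exactly one vertex, or exactly one edge (with its two endpoints). -/
def Polyhedral : Prop :=
  G.Simple ∧ ∀ f g : G.Face, f ≠ g →
    (G.boundaryV f ∩ G.boundaryV g = ∅) ∨
    (∃ v, G.boundaryV f ∩ G.boundaryV g = {v} ∧ G.boundaryE f ∩ G.boundaryE g = ∅) ∨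
    (∃ e v w, v ≠ w ∧ G.edgeJoins e v w ∧ G.boundaryE f ∩ G.boundaryE g = {e} ∧
      G.boundaryV f ∩ G.boundaryV g = {v, w})

/-- The dual embedded graph: same darts, same edge involution, rotation given
by the facial permutation, so that vertices of the dual are faces of `G`. -/
def dual : CombMap where
  D := G.D
  fintypeD := G.fintypeD
  nonemptyD := G.nonemptyD
  inv := G.inv
  inv_invol := G.inv_invol
  inv_ne := G.inv_ne
  rot := G.facePerm
  conn := by
    intro d d'
    obtain ⟨g, hg, hgd⟩ := G.conn d d'
    refine ⟨g, ?_, hgd⟩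
    have hinv2 : G.inv * G.inv = 1 := by
      ext x
      simp [Equiv.Perm.mul_apply, G.inv_invol]
    have hrot : G.rot = G.facePerm * G.inv := by
      rw [facePerm, mul_assoc, hinv2, mul_one]
    have hsub : ({G.rot, G.inv} : Set (Equiv.Perm G.D)) ⊆
        ↑(Subgroup.closure ({G.facePerm, G.inv} : Set (Equiv.Perm G.D))) := by
      rintro x (rfl | rfl)
      · rw [SetLike.mem_coe, hrot]
        exact mul_mem (Subgroup.subset_closure (Set.mem_insert _ _))
          (Subgroup.subset_closure (Set.mem_insert_of_mem _ rfl))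
      · exact Subgroup.subset_closure (Set.mem_insert_of_mem _ rfl)
    exact (Subgroup.closure_le _).2 hsub hg

end CombMap

/-- An embedded graph whose darts are labelled by the types (in `{0,1,2}`) of
their vertices; the label is constant on rotation orbits. -/
structure LabMap extends CombMap where
  lab : D → Fin 3
  lab_rot : ∀ d, lab (rot d) = lab d

namespace LabMap

variable (G : LabMap)

lemma lab_zpow (i : ℤ) : ∀ d, G.lab ((G.rot ^ i) d) = G.lab d := by
  induction i using Int.induction_on with
  | zero => intro d; simp
  | succ n ih =>
      intro d
      have h : (G.rot ^ ((n : ℤ) + 1)) d = (G.rot ^ (n : ℤ)) (G.rot d) := by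
        rw [zpow_add, zpow_one, Equiv.Perm.mul_apply]
      rw [h, ih, G.lab_rot]
  | pred n ih =>
      intro d
      have h : (G.rot ^ (-(n : ℤ) - 1)) d = (G.rot ^ (-(n : ℤ))) (G.rot⁻¹ d) := by
        rw [sub_eq_add_neg, zpow_add, zpow_neg_one, Equiv.Perm.mul_apply]
      have h2 : G.lab (G.rot⁻¹ d) = G.lab d := by
        conv_rhs => rw [← show G.rot (G.rot⁻¹ d) = d from G.rot.apply_symm_apply d]
        rw [G.lab_rot]
      rw [h, ih, h2]

/-- The type of a vertex. -/
def vtype : G.toCombMap.Vertex → Fin 3 :=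
  Quotient.lift G.lab (by
    intro a b hab
    obtain ⟨i, hi⟩ := hab
    rw [← hi, G.lab_zpow])

/-- The type of an edge: the type in `{0,1,2}` not occurring among the types
of its two endpoints (when these are distinct). -/
def edgeType (d : G.D) : Fin 3 := -(G.lab d + G.lab (G.inv d))

/-- No edge joins two vertices of the same type. -/
def NoSameTypeEdges : Prop := ∀ d, G.lab (G.inv d) ≠ G.lab d

end LabMap

/-- Witness data exhibiting `B` as the barycentric subdivision of `G`:
type-0/1/2 vertices of `B` correspond to vertices/edges/faces of `G`, and the
edges of `B` correspond to the incidences (with multiplicity) of `G`: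
each dart of `G` gives one edge of `B` of each of the three types. -/
structure BaryStruct (G : CombMap) (B : LabMap) where
  noSame : B.NoSameTypeEdges
  tri : B.toCombMap.Triangulated
  b0 : G.Vertex → B.toCombMap.Vertex
  b1 : G.Edge → B.toCombMap.Vertex
  b2 : G.Face → B.toCombMap.Vertex
  bBij : Function.Bijective
    (Sum.elim b0 (Sum.elim b1 b2) : G.Vertex ⊕ (G.Edge ⊕ G.Face) → B.toCombMap.Vertex)
  t0 : ∀ v, B.vtype (b0 v) = 0
  t1 : ∀ e, B.vtype (b1 e) = 1
  t2 : ∀ f, B.vtype (b2 f) = 2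
  c0 : G.D → B.toCombMap.Edge
  c1 : G.D → B.toCombMap.Edge
  c2 : G.D → B.toCombMap.Edge
  j2 : ∀ d, B.toCombMap.edgeJoins (c2 d) (b0 (G.vertexOf d)) (b1 (G.edgeOf d))
  j1 : ∀ d, B.toCombMap.edgeJoins (c1 d) (b0 (G.vertexOf d)) (b2 (G.faceOf d))
  j0 : ∀ d, B.toCombMap.edgeJoins (c0 d) (b1 (G.edgeOf d)) (b2 (G.faceOf d))
  cBij : Function.Bijective
    (Sum.elim c0 (Sum.elim c1 c2) : G.D ⊕ (G.D ⊕ G.D) → B.toCombMap.Edge)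

def CombMap.IsBary (G : CombMap) (B : LabMap) : Prop := Nonempty (BaryStruct G B)

/-- A local orientation-preserving symmetry-preserving operation. -/
structure Lopsp extends LabMap where
  v0 : toCombMap.Vertex
  v1 : toCombMap.Vertex
  v2 : toCombMap.Vertex
  plane : toCombMap.IsPlane
  twoConn : toCombMap.TwoConnected
  tri : toCombMap.Triangulated
  noSame : toLabMap.NoSameTypeEdges
  t0 : toLabMap.vtype v0 ≠ 1
  t2 : toLabMap.vtype v2 ≠ 1
  deg_v1 : toLabMap.vtype v1 = 1 → toCombMap.degree v1 = 2
  deg_type1 : ∀ v, v ≠ v0 → v ≠ v1 → v ≠ v2 →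
    toLabMap.vtype v = 1 → toCombMap.degree v = 4

namespace Lopsp

/-- The lopsp-operation Dual (three vertices of types 2,1,0; three edges). -/
def IsDual (O : Lopsp) : Prop :=
  Nat.card O.toLabMap.toCombMap.Vertex = 3 ∧ Nat.card O.toLabMap.toCombMap.Edge = 3 ∧
  O.toLabMap.vtype O.v0 = 2 ∧ O.toLabMap.vtype O.v1 = 1 ∧ O.toLabMap.vtype O.v2 = 0

/-- The identity lopsp-operation (three vertices of types 0,1,2; three edges). -/
def IsIdentity (O : Lopsp) : Prop :=
  Nat.card O.toLabMap.toCombMap.Vertex = 3 ∧ Nat.card O.toLabMap.toCombMap.Edge = 3 ∧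
  O.toLabMap.vtype O.v0 = 0 ∧ O.toLabMap.vtype O.v1 = 1 ∧ O.toLabMap.vtype O.v2 = 2

def EdgeBreaking (O : Lopsp) : Prop :=
  O.toLabMap.toCombMap.Adj O.v1 O.v2 ∧ O.toLabMap.vtype O.v2 = 0

def EdgePreserving (O : Lopsp) : Prop := ¬ O.EdgeBreaking

end Lopsp

/-- Witness data exhibiting the embedded graph `H` as the result `O(G)` of
applying the lopsp-operation `O` to the embedded graph `G`: a barycentric
subdivision `B` of `H` together with the projection `p = π` onto `O`,
a chamber correspondence (chambers of `B` ↔ chambers of `O` × double chambers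
of `G`, double chambers being encoded by darts of `G`), and the
identification of the 0-, 1-, 2-points of `B` with the vertices, edges and
faces of `G`. -/
structure AppData (O : Lopsp) (G H : CombMap) where
  B : LabMap
  bary : BaryStruct H B
  p : B.D → O.toLabMap.D
  p_surj : Function.Surjective p
  p_inv : ∀ d, p (B.toCombMap.inv d) = O.toLabMap.toCombMap.inv (p d)
  p_lab : ∀ d, B.lab d = O.toLabMap.lab (p d)
  chEquiv : B.toCombMap.Face ≃ O.toLabMap.toCombMap.Face × G.D
  copy0 : G.Vertex → B.toCombMap.Vertex
  copy0_inj : Function.Injective copy0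
  copy0_spec : ∀ v : G.Vertex, ∀ d : B.D, B.toCombMap.vertexOf d = copy0 v →
    O.toLabMap.toCombMap.vertexOf (p d) = O.v0
  copy0_surj : ∀ w : B.toCombMap.Vertex,
    (∃ d, B.toCombMap.vertexOf d = w ∧ O.toLabMap.toCombMap.vertexOf (p d) = O.v0) →
    ∃ v, copy0 v = w
  copy1 : G.Edge → B.toCombMap.Vertex
  copy1_inj : Function.Injective copy1
  copy1_spec : ∀ e : G.Edge, ∀ d : B.D, B.toCombMap.vertexOf d = copy1 e →
    O.toLabMap.toCombMap.vertexOf (p d) = O.v1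
  copy1_surj : ∀ w : B.toCombMap.Vertex,
    (∃ d, B.toCombMap.vertexOf d = w ∧ O.toLabMap.toCombMap.vertexOf (p d) = O.v1) →
    ∃ e, copy1 e = w
  copy2 : G.Face → B.toCombMap.Vertex
  copy2_inj : Function.Injective copy2
  copy2_spec : ∀ f : G.Face, ∀ d : B.D, B.toCombMap.vertexOf d = copy2 f →
    O.toLabMap.toCombMap.vertexOf (p d) = O.v2
  copy2_surj : ∀ w : B.toCombMap.Vertex,
    (∃ d, B.toCombMap.vertexOf d = w ∧ O.toLabMap.toCombMap.vertexOf (p d) = O.v2) →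
    ∃ f, copy2 f = w
  incid : ∀ d : G.D, ∃ dB : B.D,
    B.toCombMap.vertexOf dB = copy0 (G.vertexOf d) ∧
    (chEquiv (B.toCombMap.faceOf dB)).2 = d

namespace AppData

variable {O : Lopsp} {G H : CombMap}

/-- The vertex-shadow `S_O(v)` of a vertex `v` of `G`: the vertices of
`O(G)` whose copy in `B_{O(G)}` is of type 0 and adjacent or equal to the
copy of `v`. -/
def shadow (A : AppData O G H) (v : G.Vertex) : Set H.Vertex :=
  {x | A.bary.b0 x = A.copy0 v ∨ A.B.toCombMap.Adj (A.bary.b0 x) (A.copy0 v)}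

/-- The face-shadow `S_O(f)` of a face `f` of `G`. -/
def fshadow (A : AppData O G H) (f : G.Face) : Set H.Vertex :=
  {x | A.bary.b0 x = A.copy2 f ∨ A.B.toCombMap.Adj (A.bary.b0 x) (A.copy2 f)}

end AppData

def Lopsp.Applies (O : Lopsp) (G H : CombMap) : Prop := Nonempty (AppData O G H)

/-- A `c3`-operation: it maps polyhedral embeddings to polyhedral embeddings. -/
def Lopsp.C3 (O : Lopsp) : Prop :=
  ∀ G H : CombMap, G.Polyhedral → O.Applies G H → H.Polyhedral

namespace CombMap

/-- The darts of the subgraph induced by the vertex set `S`. -/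
def HD (G : CombMap) (S : Set G.Vertex) : Set G.D :=
  {d | G.vertexOf d ∈ S ∧ G.vertexOf (G.inv d) ∈ S}

/-- Reachability by walks staying inside the vertex set `S`. -/
def ReachWithin (G : CombMap) (S : Set G.Vertex) : G.Vertex → G.Vertex → Prop :=
  Relation.ReflTransGen (fun a b => a ∈ S ∧ b ∈ S ∧ G.Adj a b)

open Classical in
/-- The number of rotation steps from `d` to the next dart in `A`. -/
noncomputable def stepsTo (G : CombMap) (A : Set G.D) (d : G.D) : ℕ :=
  if h : ∃ k : ℕ, 0 < k ∧ (G.rot ^ k) d ∈ A then Nat.find h else 0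

/-- The next dart of `A` after `d` in the rotation at its vertex. -/
noncomputable def nextIn (G : CombMap) (A : Set G.D) (d : G.D) : G.D :=
  (G.rot ^ G.stepsTo A d) d

/-- The facial permutation of the embedded subgraph with dart set `A`. -/
noncomputable def faceStep (G : CombMap) (A : Set G.D) (d : G.D) : G.D :=
  G.nextIn A (G.inv d)

/-- Two darts of `A` lie on the same face of the embedded subgraph `A`. -/
def SameFaceIn (G : CombMap) (A : Set G.D) : G.D → G.D → Prop :=
  Relation.EqvGen (fun a b => a ∈ A ∧ b = G.faceStep A a)

/-- The vertex `u` lies in the interior of the face of the induced embedded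
subgraph on `S` represented by the dart `d`: `u ∉ S`, and `u` belongs to a
bridge attached in an angle of that face (an angle at a boundary dart `e`
of the face, formed by darts strictly between `e` and the next induced dart
in the rotation at its vertex). -/
def InInterior (G : CombMap) (S : Set G.Vertex) (d : G.D) (u : G.Vertex) : Prop :=
  u ∉ S ∧ ∃ (e : G.D) (j : ℕ), e ∈ G.HD S ∧
    G.SameFaceIn (G.HD S) (G.inv e) d ∧
    0 < j ∧ j < G.stepsTo (G.HD S) e ∧
    (u = G.vertexOf (G.inv ((G.rot ^ j) e)) ∨
      G.ReachAvoiding S (G.vertexOf (G.inv ((G.rot ^ j) e))) u)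

end CombMap

/-!
In a triangulation two consecutive darts at a vertex span a facial triangle, so their heads are
adjacent. Hence the vertices seen in one angle of the induced subgraph `H` (the heads of the
darts strictly between two consecutive darts of `H` at a vertex) are joined by a path avoiding
`H`. Where the facial walk of `H` passes from one angle to the next through a boundary edge, the
triangle on that edge makes the last vertex of the first angle the first vertex of the second,
and an angle is empty exactly when the next one is. So all angle vertices along a face of `H`,
and with them all interior vertices, are joined outside `H`. When `H` is a single vertex `v`
without loops, the same fan argument joins all neighbours of `v`, and every other vertex reaches
a neighbour of `v` without passing through `v`.
-/

namespace CombMap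

variable {G : CombMap}

lemma vertexOf_rot_pow (d : G.D) (k : ℕ) : G.vertexOf ((G.rot ^ k) d) = G.vertexOf d :=
  Quotient.sound (Equiv.Perm.sameCycle_pow_left.2 (Equiv.Perm.SameCycle.refl _ _))

lemma vertexOf_rot (d : G.D) : G.vertexOf (G.rot d) = G.vertexOf d := by
  simpa using vertexOf_rot_pow d 1

lemma Adj.symm {u w : G.Vertex} (h : G.Adj u w) : G.Adj w u := by
  obtain ⟨d, rfl, rfl⟩ := h
  exact ⟨G.inv d, rfl, by rw [G.inv_invol]⟩

lemma ReachAvoiding.symm {X : Set G.Vertex} {u w : G.Vertex} (h : G.ReachAvoiding X u w) :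
    G.ReachAvoiding X w u := by
  induction h with
  | refl => exact .refl
  | tail _ hab ih => exact .head ⟨hab.2.1, hab.1, hab.2.2.symm⟩ ih

lemma exists_vertexOf_eq (u : G.Vertex) : ∃ d, G.vertexOf d = u := Quotient.exists_rep u

lemma induction_adj {P : G.Vertex → Prop} {u : G.Vertex} (hu : P u)
    (hadj : ∀ a b, G.Adj a b → P a → P b) (w : G.Vertex) : P w := by
  have hinv (d : G.D) : P (G.vertexOf d) ↔ P (G.vertexOf (G.inv d)) :=
    ⟨hadj _ _ ⟨d, rfl, rfl⟩, hadj _ _ ⟨G.inv d, rfl, by rw [G.inv_invol]⟩⟩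
  have hclosure : ∀ g ∈ Subgroup.closure ({G.rot, G.inv} : Set (Equiv.Perm G.D)),
      ∀ d, P (G.vertexOf d) ↔ P (G.vertexOf (g d)) := by
    intro g hg
    induction hg using Subgroup.closure_induction with
    | mem g hg =>
      rcases hg with rfl | rfl
      · simp only [vertexOf_rot, implies_true]
      · exact hinv
    | one => simp
    | mul g g' _ _ ih ih' => exact fun d => (ih' d).trans (ih (g' d))
    | inv g _ ih => exact fun d => by simpa using (ih (g⁻¹ d)).symm
  obtain ⟨d, rfl⟩ := exists_vertexOf_eq u
  obtain ⟨d', rfl⟩ := exists_vertexOf_eq w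
  obtain ⟨g, hg, rfl⟩ := G.conn d d'
  exact (hclosure g hg d).1 hu

/-- `inv d`, `rot d`, `rot (inv (rot d))` is a facial triangle, so the third dart ends at the
head of `d`. -/
lemma vertexOf_inv_rot_inv_rot (htri : G.Triangulated) (d : G.D) :
    G.vertexOf (G.inv (G.rot (G.inv (G.rot d)))) = G.vertexOf (G.inv d) := by
  have h := (htri (G.inv d)).2
  simp only [facePerm, Equiv.Perm.mul_apply, G.inv_invol] at h
  rw [← vertexOf_rot (G.inv (G.rot (G.inv (G.rot d)))), h]

lemma adj_vertexOf_inv_rot (htri : G.Triangulated) (d : G.D) :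
    G.Adj (G.vertexOf (G.inv (G.rot d))) (G.vertexOf (G.inv d)) :=
  ⟨G.rot (G.inv (G.rot d)), vertexOf_rot _, vertexOf_inv_rot_inv_rot htri d⟩

lemma reachAvoiding_vertexOf_inv_rot_pow (htri : G.Triangulated) {S : Set G.Vertex}
    (d : G.D) (n : ℕ) (h : ∀ j ≤ n, G.vertexOf (G.inv ((G.rot ^ j) d)) ∉ S) :
    G.ReachAvoiding S (G.vertexOf (G.inv d)) (G.vertexOf (G.inv ((G.rot ^ n) d))) := by
  induction n with
  | zero => exact .refl
  | succ n ih =>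
    refine (ih fun j hj => h j (by omega)).tail ⟨h n (by omega), h (n + 1) le_rfl, ?_⟩
    rw [pow_succ', Equiv.Perm.mul_apply]
    exact (adj_vertexOf_inv_rot htri _).symm

section stepsTo

variable {A : Set G.D} {d : G.D}

lemma pow_stepsTo_mem (h : 0 < G.stepsTo A d) : (G.rot ^ G.stepsTo A d) d ∈ A := by
  classical
  unfold stepsTo at h ⊢
  split at h
  · rw [dif_pos ‹_›]
    exact (Nat.find_spec ‹∃ k, 0 < k ∧ (G.rot ^ k) d ∈ A›).2
  · exact absurd h (lt_irrefl 0)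

lemma stepsTo_pos (hd : d ∈ A) : 0 < G.stepsTo A d := by
  classical
  have hex : ∃ k : ℕ, 0 < k ∧ (G.rot ^ k) d ∈ A :=
    ⟨orderOf G.rot, orderOf_pos _, by rwa [pow_orderOf_eq_one]⟩
  unfold stepsTo
  rw [dif_pos hex]
  exact (Nat.find_spec hex).1

lemma nextIn_mem (hd : d ∈ A) : G.nextIn A d ∈ A := pow_stepsTo_mem (stepsTo_pos hd)

lemma pow_notMem_of_lt_stepsTo {j : ℕ} (hj : 0 < j) (hlt : j < G.stepsTo A d) :
    (G.rot ^ j) d ∉ A := by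
  classical
  intro hm
  unfold stepsTo at hlt
  split at hlt
  · exact Nat.find_min ‹_› hlt ⟨hj, hm⟩
  · omega

lemma stepsTo_le {k : ℕ} (hk : 0 < k) (hm : (G.rot ^ k) d ∈ A) : G.stepsTo A d ≤ k := by
  classical
  unfold stepsTo
  rw [dif_pos ⟨k, hk, hm⟩]
  exact Nat.find_min' _ ⟨hk, hm⟩

end stepsTo

lemma inv_mem_HD {S : Set G.Vertex} {d : G.D} (h : d ∈ G.HD S) : G.inv d ∈ G.HD S :=
  ⟨h.2, by rw [G.inv_invol]; exact h.1⟩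

/-- The vertices seen in the angle of the induced subgraph on `S` that starts at `e`. -/
def IsAngleVertex (S : Set G.Vertex) (e : G.D) (u : G.Vertex) : Prop :=
  ∃ j, 0 < j ∧ j < G.stepsTo (G.HD S) e ∧ u = G.vertexOf (G.inv ((G.rot ^ j) e))

variable {S : Set G.Vertex} {e : G.D}

lemma exists_isAngleVertex_iff : (∃ u, IsAngleVertex S e u) ↔ 1 < G.stepsTo (G.HD S) e :=
  ⟨fun ⟨_, j, hj, hlt, _⟩ => by omega, fun h => ⟨_, 1, one_pos, h, rfl⟩⟩

lemma vertexOf_inv_notMem_of_lt_stepsTo {j : ℕ} (hj : 0 < j)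
    (hlt : j < G.stepsTo (G.HD S) e) : G.vertexOf (G.inv ((G.rot ^ j) e)) ∉ S := by
  have hS : G.vertexOf e ∈ S := by
    simpa only [vertexOf_rot_pow] using (pow_stepsTo_mem (A := G.HD S) (by omega)).1
  exact fun hm => pow_notMem_of_lt_stepsTo hj hlt ⟨by rwa [vertexOf_rot_pow], hm⟩

lemma reachAvoiding_of_le_of_lt_stepsTo (htri : G.Triangulated) {i j : ℕ} (hi : 0 < i)
    (hij : i ≤ j) (hj : j < G.stepsTo (G.HD S) e) :
    G.ReachAvoiding S (G.vertexOf (G.inv ((G.rot ^ i) e)))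
      (G.vertexOf (G.inv ((G.rot ^ j) e))) := by
  obtain ⟨n, rfl⟩ := Nat.exists_eq_add_of_le hij
  have hpow (k : ℕ) : (G.rot ^ k) ((G.rot ^ i) e) = (G.rot ^ (i + k)) e := by
    rw [← Equiv.Perm.mul_apply, ← pow_add, add_comm]
  simpa only [hpow] using reachAvoiding_vertexOf_inv_rot_pow htri ((G.rot ^ i) e) n
    fun k hk => by rw [hpow]; exact vertexOf_inv_notMem_of_lt_stepsTo (by omega) (by omega)

lemma IsAngleVertex.reachAvoiding (htri : G.Triangulated) {u v : G.Vertex}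
    (hu : IsAngleVertex S e u) (hv : IsAngleVertex S e v) : G.ReachAvoiding S u v := by
  obtain ⟨i, hi, hilt, rfl⟩ := hu
  obtain ⟨j, hj, hjlt, rfl⟩ := hv
  rcases le_total i j with h | h
  · exact reachAvoiding_of_le_of_lt_stepsTo htri hi h hjlt
  · exact (reachAvoiding_of_le_of_lt_stepsTo htri hj h hilt).symm

/-- The last angle vertex at `e` is the first one at the dart where the face of the induced
subgraph continues: both are the third corner of the triangle on the edge `nextIn e`. -/
lemma vertexOf_inv_rot_inv_nextIn (htri : G.Triangulated) (he : e ∈ G.HD S) :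
    G.vertexOf (G.inv (G.rot (G.inv (G.nextIn (G.HD S) e)))) =
      G.vertexOf (G.inv ((G.rot ^ (G.stepsTo (G.HD S) e - 1)) e)) := by
  obtain ⟨m, hm⟩ := Nat.exists_eq_add_of_lt (stepsTo_pos he)
  rw [nextIn, hm, Nat.add_sub_cancel, pow_succ', Equiv.Perm.mul_apply, zero_add]
  exact vertexOf_inv_rot_inv_rot htri _

lemma stepsTo_eq_one_iff (he : e ∈ G.HD S) :
    G.stepsTo (G.HD S) e = 1 ↔ G.vertexOf (G.inv (G.rot e)) ∈ S := by
  refine ⟨fun h => by simpa [h] using (pow_stepsTo_mem (stepsTo_pos he)).2, fun h => ?_⟩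
  have hrot : (G.rot ^ 1) e ∈ G.HD S := ⟨by rw [vertexOf_rot_pow]; exact he.1, by simpa⟩
  have hle := stepsTo_le one_pos hrot
  have hpos := stepsTo_pos he
  omega

lemma stepsTo_eq_one_iff_vertexOf_inv_rot_pow_pred_mem (he : e ∈ G.HD S) :
    G.stepsTo (G.HD S) e = 1 ↔
      G.vertexOf (G.inv ((G.rot ^ (G.stepsTo (G.HD S) e - 1)) e)) ∈ S := by
  refine ⟨fun h => by simpa [h] using he.2, fun h => ?_⟩
  by_contra hne
  have hpos := stepsTo_pos he
  exact vertexOf_inv_notMem_of_lt_stepsTo (j := G.stepsTo (G.HD S) e - 1) (by omega)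
    (by omega) h

/-- The nonemptiness clause is what makes this relation transitive. -/
def AngleLinked (S : Set G.Vertex) (e e' : G.D) : Prop :=
  ((∃ u, IsAngleVertex S e u) ↔ ∃ u, IsAngleVertex S e' u) ∧
    ∀ u v, IsAngleVertex S e u → IsAngleVertex S e' v → G.ReachAvoiding S u v

lemma angleLinked_equivalence (htri : G.Triangulated) : Equivalence (AngleLinked (G := G) S) where
  refl _ := ⟨Iff.rfl, fun _ _ hu hv => hu.reachAvoiding htri hv⟩
  symm h := ⟨h.1.symm, fun u v hu hv => (h.2 v u hv hu).symm⟩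
  trans h h' := ⟨h.1.trans h'.1, fun u v hu hv => by
    obtain ⟨w, hw⟩ := h.1.1 ⟨u, hu⟩
    exact (h.2 u w hu hw).trans (h'.2 w v hw hv)⟩

lemma angleLinked_inv_nextIn (htri : G.Triangulated) (he : e ∈ G.HD S) :
    AngleLinked S e (G.inv (G.nextIn (G.HD S) e)) := by
  have he' := inv_mem_HD (nextIn_mem he)
  have hcorner := vertexOf_inv_rot_inv_nextIn htri he
  have hempty :
      G.stepsTo (G.HD S) e = 1 ↔ G.stepsTo (G.HD S) (G.inv (G.nextIn (G.HD S) e)) = 1 := by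
    rw [stepsTo_eq_one_iff he', hcorner, stepsTo_eq_one_iff_vertexOf_inv_rot_pow_pred_mem he]
  have hpos := stepsTo_pos he
  have hpos' := stepsTo_pos he'
  refine ⟨by rw [exists_isAngleVertex_iff, exists_isAngleVertex_iff]; omega,
    fun u v hu hv => ?_⟩
  have hlong : 1 < G.stepsTo (G.HD S) e := exists_isAngleVertex_iff.1 ⟨u, hu⟩
  have hlong' : 1 < G.stepsTo (G.HD S) (G.inv (G.nextIn (G.HD S) e)) := by omega
  have hw : IsAngleVertex S e (G.vertexOf (G.inv ((G.rot ^ (G.stepsTo (G.HD S) e - 1)) e))) :=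
    ⟨_, by omega, by omega, rfl⟩
  have hw' : IsAngleVertex S (G.inv (G.nextIn (G.HD S) e))
      (G.vertexOf (G.inv ((G.rot ^ (G.stepsTo (G.HD S) e - 1)) e))) :=
    ⟨1, one_pos, hlong', by rw [pow_one, hcorner]⟩
  exact (hu.reachAvoiding htri hw).trans (hw'.reachAvoiding htri hv)

lemma angleLinked_of_sameFaceIn (htri : G.Triangulated) {x y : G.D}
    (h : G.SameFaceIn (G.HD S) x y) : AngleLinked S (G.inv x) (G.inv y) := by
  refine ((angleLinked_equivalence htri).comap G.inv).eqvGen_iff.1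
    (Relation.EqvGen.mono (fun a b hab => ?_) x y h)
  obtain ⟨ha, rfl⟩ := hab
  exact angleLinked_inv_nextIn htri (inv_mem_HD ha)

lemma InInterior.exists_reachAvoiding_isAngleVertex {d : G.D} {u : G.Vertex}
    (h : G.InInterior S d u) :
    ∃ e v, G.SameFaceIn (G.HD S) (G.inv e) d ∧ IsAngleVertex S e v ∧
      G.ReachAvoiding S v u := by
  obtain ⟨-, e, j, -, hface, hj, hjlt, hu⟩ := h
  refine ⟨e, _, hface, ⟨j, hj, hjlt, rfl⟩, ?_⟩
  rcases hu with rfl | hu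
  exacts [.refl, hu]

lemma reachAvoiding_vertexOf_inv_of_vertexOf_eq (htri : G.Triangulated) {v : G.Vertex}
    (hloop : ∀ d, G.vertexOf d = v → G.vertexOf (G.inv d) ≠ v) {d d' : G.D}
    (hd : G.vertexOf d = v) (hd' : G.vertexOf d' = v) :
    G.ReachAvoiding {v} (G.vertexOf (G.inv d)) (G.vertexOf (G.inv d')) := by
  have hcycle : G.rot.SameCycle d d' := Quotient.exact (hd.trans hd'.symm)
  obtain ⟨n, rfl⟩ := hcycle.exists_nat_pow_eq
  exact reachAvoiding_vertexOf_inv_rot_pow htri d n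
    fun j _ => hloop _ (by rw [vertexOf_rot_pow, hd])

lemma reachAvoiding_singleton_of_forall_vertexOf_inv_ne (htri : G.Triangulated) {v : G.Vertex}
    (hloop : ∀ d, G.vertexOf d = v → G.vertexOf (G.inv d) ≠ v) {u w : G.Vertex}
    (hu : u ≠ v) (hw : w ≠ v) : G.ReachAvoiding {v} u w := by
  obtain ⟨d₀, hd₀⟩ := exists_vertexOf_eq v
  suffices h : ∀ x, x = v ∨ G.ReachAvoiding {v} x (G.vertexOf (G.inv d₀)) from
    ((h u).resolve_left hu).trans ((h w).resolve_left hw).symm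
  refine induction_adj (Or.inl rfl) fun a b ⟨d, hda, hdb⟩ ha => ?_
  by_cases hbv : b = v
  · exact .inl hbv
  by_cases hav : a = v
  · subst hav
    exact .inr (hdb ▸ reachAvoiding_vertexOf_inv_of_vertexOf_eq htri hloop hda hd₀)
  · have hba : G.Adj b a := ⟨G.inv d, hdb, by rw [G.inv_invol, hda]⟩
    exact .inr (.head ⟨hbv, hav, hba⟩ (ha.resolve_left hav))

end CombMap

theorem interior_in_one_component_general (G : CombMap)
    (htri : G.Triangulated) (S : Set G.Vertex) :
    (∀ d u w, d ∈ G.HD S → G.InInterior S d u → G.InInterior S d w →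
        G.ReachAvoiding S u w) ∧
    (∀ v0 : G.Vertex, S = {v0} → G.HD S = ∅ →
        ∀ u w : G.Vertex, u ≠ v0 → w ≠ v0 → G.ReachAvoiding S u w) := by
  refine ⟨fun d u w _ hu hw => ?_, fun v0 hS hHD u w hu hw => ?_⟩
  · obtain ⟨e, x, hex, hx, hxu⟩ := hu.exists_reachAvoiding_isAngleVertex
    obtain ⟨e', y, hey, hy, hyw⟩ := hw.exists_reachAvoiding_isAngleVertex
    have hlink := CombMap.angleLinked_of_sameFaceIn htri (hex.trans _ _ _ (hey.symm _ _))
    rw [G.inv_invol, G.inv_invol] at hlink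
    exact hxu.symm.trans ((hlink.2 x y hx hy).trans hyw)
  · subst hS
    refine CombMap.reachAvoiding_singleton_of_forall_vertexOf_inv_ne htri (fun d hd hd' => ?_) hu hw
    have hmem : d ∈ G.HD {v0} := ⟨hd, hd'⟩
    rwa [hHD] at hmem

/-- Let `G` be a plane triangulation and `H` the connected induced
embedded subgraph on a vertex set `S`. For any face of `H` (represented by a
dart `d` of `H`), all vertices of `G` lying in the interior of that face belong
to the same connected component of `G \ H`; moreover if `H` is a single vertex
with no edges then `G \ H` is connected. -/
theorem interior_in_one_component (G : CombMap) (hpl : G.IsPlane)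
    (htri : G.Triangulated) (S : Set G.Vertex) (hne : S.Nonempty)
    (hconn : ∀ u ∈ S, ∀ w ∈ S, G.ReachWithin S u w) :
    (∀ d u w, d ∈ G.HD S → G.InInterior S d u → G.InInterior S d w →
        G.ReachAvoiding S u w) ∧
    (∀ v0 : G.Vertex, S = {v0} → G.HD S = ∅ →
        ∀ u w : G.Vertex, u ≠ v0 → w ≠ v0 → G.ReachAvoiding S u w) :=
  interior_in_one_component_general G htri S
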